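/- Let T be a triangulated category admitting arbitrary coproducts and products. Let (S_j)_{j ≤ −1} be a decreasing family of strictly full triangulated subcategories of T (S_j ⊇ S_{j-1}), each closed under arbitrary coproducts and arbitrary products in T, with ∩_j S_j = {0}. Let (X_j)_{j ≤ −1} be a family of objects with X_j ∈ S_j for each j. Then the canonical morphism from the coproduct ⊕_{j ≤ −1} X_j to the product ∏_{j ≤ −1} X_j is an isomorphism. -/

import Mathlib

/-!
Let `Z` be a cone of the canonical map `⊕ X_j → ∏ X_j`. For every `a`, splitting the indices
into `j ≤ a` and the finitely many `j > a` writes this map as the biproduct of the canonical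
map of the tail, whose source and target lie in `S_a`, and of the canonical map of a finite
family, which is an isomorphism. Hence `Z ∈ S_a` for all `a`, so `Z = 0`.
-/

open CategoryTheory CategoryTheory.Limits CategoryTheory.Pretriangulated Opposite ZeroObject

universe v u

variable {C : Type u} [Category.{v} C] [Preadditive C] [HasZeroObject C]
  [HasShift C ℤ] [∀ n : ℤ, (shiftFunctor C n).Additive] [Pretriangulated C]
  [HasCoproducts.{v} C] [HasProducts.{v} C]

/-- A strictly full triangulated subcategory, given by its set of objects. -/
structure IsTriangulatedSub (S : Set C) : Prop where
  zero_mem : (0 : C) ∈ S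
  iso_closed : ∀ {X Y : C}, (X ≅ Y) → X ∈ S → Y ∈ S
  shift_mem : ∀ (X : C) (n : ℤ), X ∈ S → (X⟦n⟧ : C) ∈ S
  ext_mem : ∀ (T : Triangle C), T ∈ (distTriang C) → T.obj₁ ∈ S → T.obj₂ ∈ S → T.obj₃ ∈ S

universe w

section CanonicalMap

variable {D : Type*} [Category D] [HasZeroMorphisms D]

noncomputable def sigmaToPi {ι : Type w} [DecidableEq ι] (f : ι → D) [HasCoproduct f]
    [HasProduct f] : ∐ f ⟶ ∏ᶜ f :=
  Sigma.desc fun i => Pi.lift fun j => if h : i = j then eqToHom (congrArg f h) else 0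

lemma isIso_sigmaToPi {ι : Type w} [DecidableEq ι] (f : ι → D) [HasBiproduct f] :
    IsIso (sigmaToPi f) := by
  have : sigmaToPi f = (biproduct.isoCoproduct f).inv ≫ (biproduct.isoProduct f).hom := by
    ext i j
    simp [sigmaToPi, biproduct.isoCoproduct_inv, biproduct.isoProduct_hom, biproduct.ι_π]
  rw [this]
  infer_instance

variable [HasBinaryBiproducts D] {ι : Type w} (f : ι → D) (p : ι → Prop) [DecidablePred p]

noncomputable def sigmaIsoBiprodSubtype [HasCoproducts.{w} D] :
    ∐ f ≅ (∐ fun i : {i // p i} => f i) ⊞ (∐ fun i : {i // ¬ p i} => f i) where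
  hom := Sigma.desc fun i =>
    if h : p i then Sigma.ι (fun i : {i // p i} => f i) ⟨i, h⟩ ≫ biprod.inl
    else Sigma.ι (fun i : {i // ¬ p i} => f i) ⟨i, h⟩ ≫ biprod.inr
  inv := biprod.desc (Sigma.desc fun i => Sigma.ι f i) (Sigma.desc fun i => Sigma.ι f i)
  hom_inv_id := by
    ext i
    by_cases h : p i <;> simp [h]
  inv_hom_id := by
    ext i <;> simp [i.2]

noncomputable def piIsoBiprodSubtype [HasProducts.{w} D] :
    ∏ᶜ f ≅ (∏ᶜ fun i : {i // p i} => f i) ⊞ (∏ᶜ fun i : {i // ¬ p i} => f i) where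
  hom := biprod.lift (Pi.lift fun i => Pi.π f i) (Pi.lift fun i => Pi.π f i)
  inv := Pi.lift fun i =>
    if h : p i then biprod.fst ≫ Pi.π (fun i : {i // p i} => f i) ⟨i, h⟩
    else biprod.snd ≫ Pi.π (fun i : {i // ¬ p i} => f i) ⟨i, h⟩
  hom_inv_id := by
    ext i
    by_cases h : p i <;> simp [h]
  inv_hom_id := by
    ext i <;> simp [i.2]

lemma sigmaIsoBiprodSubtype_hom_comp_biprod_map [DecidableEq ι] [HasCoproducts.{w} D]
    [HasProducts.{w} D] :
    (sigmaIsoBiprodSubtype f p).hom ≫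
        biprod.map (sigmaToPi fun i : {i // p i} => f i) (sigmaToPi fun i : {i // ¬ p i} => f i) =
      sigmaToPi f ≫ (piIsoBiprodSubtype f p).hom := by
  ext i : 1
  apply biprod.hom_ext <;> ext j <;> by_cases h : p i <;>
    simp [sigmaToPi, sigmaIsoBiprodSubtype, piIsoBiprodSubtype, h, Subtype.ext_iff]
  all_goals rintro rfl; simp_all [j.2]

end CanonicalMap

section Triangulated

variable {D : Type*} [Category D] [Preadditive D] [HasZeroObject D] [HasShift D ℤ]
  [∀ n : ℤ, (shiftFunctor D n).Additive] [Pretriangulated D]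

namespace IsTriangulatedSub

variable {S : Set D}

lemma isClosedUnderIsomorphisms (hS : IsTriangulatedSub S) :
    ObjectProperty.IsClosedUnderIsomorphisms (· ∈ S) :=
  ⟨fun e hX => hS.iso_closed e hX⟩

lemma isTriangulated (hS : IsTriangulatedSub S) : ObjectProperty.IsTriangulated (· ∈ S) :=
  have := hS.isClosedUnderIsomorphisms
  have : ObjectProperty.IsStableUnderShift (· ∈ S) ℤ :=
    ⟨fun n => ⟨fun X hX => hS.shift_mem X n hX⟩⟩
  have : ObjectProperty.IsTriangulatedClosed₃ (· ∈ S) := .mk' hS.ext_mem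
  { exists_zero := ⟨0, isZero_zero D, hS.zero_mem⟩
    toIsTriangulatedClosed₂ := .of_isTriangulatedClosed₃ }

end IsTriangulatedSub

namespace CategoryTheory.ObjectProperty

variable (P : ObjectProperty D) [P.IsTriangulated]

lemma trW_of_prop {X Y : D} (f : X ⟶ Y) (hX : P X) (hY : P Y) : P.trW f := by
  obtain ⟨Z, g, h, hT⟩ := distinguished_cocone_triangle f
  rw [← trW_isoClosure]
  exact ⟨Z, g, h, hT, P.ext_of_isTriangulatedClosed₃' _ hT hX hY⟩

lemma trW_biprod_map {X₁ X₂ Y₁ Y₂ : D} {u : X₁ ⟶ Y₁} {v : X₂ ⟶ Y₂} (hu : P.trW u)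
    (hv : P.trW v) : P.trW (biprod.map u v) := by
  have hprod : P.trW (prod.map u v) :=
    MorphismProperty.limMap (W := P.trW) (X := Limits.pair X₁ X₂)
      (Y := Limits.pair Y₁ Y₂) (mapPair u v) (by rintro ⟨_ | _⟩; exacts [hu, hv])
  refine (P.trW.arrow_mk_iso_iff ?_).2 hprod
  exact Arrow.isoMk (biprod.isoProd _ _) (biprod.isoProd _ _) (by dsimp; ext <;> simp)

lemma trW_sigmaToPi [HasCoproducts.{w} D] [HasProducts.{w} D] {ι : Type w} [DecidableEq ι]
    (f : ι → D) (p : ι → Prop) [DecidablePred p] [Finite {i // ¬ p i}]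
    (hsigma : P (∐ fun i : {i // p i} => f i)) (hpi : P (∏ᶜ fun i : {i // p i} => f i)) :
    P.trW (sigmaToPi f) := by
  have e : Arrow.mk (sigmaToPi f) ≅ Arrow.mk (biprod.map (sigmaToPi fun i : {i // p i} => f i)
      (sigmaToPi fun i : {i // ¬ p i} => f i)) :=
    Arrow.isoMk (sigmaIsoBiprodSubtype f p) (piIsoBiprodSubtype f p)
      (sigmaIsoBiprodSubtype_hom_comp_biprod_map f p)
  have := isIso_sigmaToPi fun i : {i // ¬ p i} => f i
  exact (P.trW.arrow_mk_iso_iff e).2 <|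
    P.trW_biprod_map (P.trW_of_prop _ hsigma hpi) (P.trW_of_isIso _)

end CategoryTheory.ObjectProperty

end Triangulated

lemma finite_subtype_not_le (a b : ℤ) :
    Finite {i : ULift.{w} {j : ℤ // j ≤ b} // ¬ i.down.1 ≤ a} :=
  Set.Finite.to_subtype <| ((Set.finite_Ioc a b).preimage
    (Subtype.val_injective.comp ULift.down_injective).injOn).subset
    fun i hi => ⟨not_le.1 hi, i.down.2⟩

theorem coproduct_to_product_iso_of_decreasing_membership
    (S : ℤ → Set C) (hS : ∀ j, IsTriangulatedSub (S j))
    (hdec : ∀ j : ℤ, S (j - 1) ⊆ S j)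
    (hcoprod : ∀ (m : ℤ) {ι : Type v} (f : ι → C), (∀ i, f i ∈ S m) → (∐ f) ∈ S m)
    (hprod : ∀ (m : ℤ) {ι : Type v} (f : ι → C), (∀ i, f i ∈ S m) → (∏ᶜ f) ∈ S m)
    (hinter : ∀ Z : C, (∀ m, Z ∈ S m) → IsZero Z)
    (X : ULift.{v} {j : ℤ // j ≤ -1} → C)
    (hX : ∀ i, X i ∈ S i.down.val) :
    IsIso (Sigma.desc (fun i => Pi.lift
      (fun j => if h : i = j then eqToHom (congrArg X h) else (0 : X i ⟶ X j)))) := by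
  change IsIso (sigmaToPi X)
  have hmono : Monotone S := monotone_int_of_le_succ fun n => by simpa using hdec (n + 1)
  obtain ⟨Z, g, h, hT⟩ := distinguished_cocone_triangle (sigmaToPi X)
  refine (Triangle.isZero₃_iff_isIso₁ _ hT).1 (hinter Z fun a => ?_)
  have := (hS a).isTriangulated
  have := (hS a).isClosedUnderIsomorphisms
  have := finite_subtype_not_le.{v} a (-1)
  have hlow : ∀ i : {i : ULift.{v} {j : ℤ // j ≤ -1} // i.down.1 ≤ a}, X i ∈ S a :=
    fun i => hmono i.2 (hX i)
  exact (ObjectProperty.trW_iff_of_distinguished _ _ hT).1 <| ObjectProperty.trW_sigmaToPi _ X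
    (fun i => i.down.1 ≤ a) (hcoprod a _ hlow) (hprod a _ hlow)
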